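/- Define I(α, β) = ∫_{α}^{∞} φ(u) Φ(u + β) du for α, β ∈ ℝ, where φ and Φ are the standard normal density and CDF. Then for all α, β ∈ ℝ the identity I(α, β) = Φ(β/√2) − Φ(α) + I(β/√2, √2·α) holds. -/

import Mathlib

/-! Substituting `y = √2 t + u` writes `Φ(u + β) = ∫_{t ≤ β/√2} √2 φ(√2 t + u) dt`. Since
`u² + (√2 t + u)²` is symmetric in `u` and `t`, we have `φ(u) φ(√2 t + u) = φ(t) φ(√2 u + t)`, so
Fubini gives `∫_s φ(u) Φ(u + β) du = ∫_{t ≤ β/√2} φ(t) ∫_s √2 φ(√2 u + t) du dt` for every `s`.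
For `s = (α, ∞)` the inner integral is `1 - Φ(√2 α + t)`, hence
`I(α, β) = Φ(β/√2) - ∫_{t ≤ β/√2} φ(t) Φ(t + √2 α) dt`; for `s = ℝ` it is `1`, hence
`∫ φ(t) Φ(t + √2 α) dt = Φ(α)`. Splitting this last integral at `β/√2` gives the identity. -/

open MeasureTheory Set

/-- Standard normal density `φ(x) = (1/√(2π)) e^{−x²/2}`. -/
noncomputable def stdNormalPDF (x : ℝ) : ℝ :=
  (Real.sqrt (2 * Real.pi))⁻¹ * Real.exp (-x ^ 2 / 2)

/-- Standard normal CDF `Φ(x) = ∫_{-∞}^x φ(u) du`. -/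
noncomputable def stdNormalCDF (x : ℝ) : ℝ :=
  ∫ u in Set.Iic x, stdNormalPDF u

/-- The integral function `I(α, β) = ∫_α^∞ φ(u) Φ(u + β) du`. -/
noncomputable def intI (α β : ℝ) : ℝ :=
  ∫ u in Set.Ioi α, stdNormalPDF u * stdNormalCDF (u + β)

open ProbabilityTheory

theorem setIntegral_comp_mul_add {E : Type*} [NormedAddCommGroup E] [NormedSpace ℝ E]
    (f : ℝ → E) {a : ℝ} (ha : a ≠ 0) (b : ℝ) (s : Set ℝ) :
    ∫ x in (fun t => a * t + b) ⁻¹' s, f (a * x + b) = |a|⁻¹ • ∫ y in s, f y := by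
  have hemb : MeasurableEmbedding (fun t : ℝ => a * t + b) :=
    ((Homeomorph.mulLeft₀ a ha).trans (Homeomorph.addRight b)).measurableEmbedding
  have hmap : volume.map (fun t : ℝ => a * t + b) = ENNReal.ofReal |a⁻¹| • volume := by
    rw [show (fun t : ℝ => a * t + b) = (· + b) ∘ (a * ·) from rfl,
      ← Measure.map_map (measurable_add_const b) (measurable_const_mul a),
      Real.map_volume_mul_left ha, Measure.map_smul, (measurePreserving_add_right volume b).map_eq]
  rw [← hemb.setIntegral_map, hmap, Measure.restrict_smul, integral_smul_measure,
    ENNReal.toReal_ofReal (abs_nonneg _), abs_inv]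

theorem stdNormalPDF_eq_gaussianPDFReal : stdNormalPDF = gaussianPDFReal 0 1 := by
  ext x
  simp [stdNormalPDF, gaussianPDFReal]

theorem stdNormalPDF_nonneg (x : ℝ) : 0 ≤ stdNormalPDF x := by
  unfold stdNormalPDF
  positivity

@[fun_prop]
theorem continuous_stdNormalPDF : Continuous stdNormalPDF := by
  unfold stdNormalPDF
  fun_prop

theorem integrable_stdNormalPDF : Integrable stdNormalPDF := by
  rw [stdNormalPDF_eq_gaussianPDFReal]
  exact integrable_gaussianPDFReal 0 1

theorem integral_stdNormalPDF : ∫ x, stdNormalPDF x = 1 := by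
  rw [stdNormalPDF_eq_gaussianPDFReal]
  exact integral_gaussianPDFReal_eq_one 0 one_ne_zero

theorem stdNormalCDF_nonneg (x : ℝ) : 0 ≤ stdNormalCDF x :=
  setIntegral_nonneg measurableSet_Iic fun u _ => stdNormalPDF_nonneg u

theorem stdNormalCDF_le_one (x : ℝ) : stdNormalCDF x ≤ 1 :=
  integral_stdNormalPDF ▸
    setIntegral_le_integral integrable_stdNormalPDF (.of_forall stdNormalPDF_nonneg)

theorem monotone_stdNormalCDF : Monotone stdNormalCDF := fun _ _ hxy =>
  setIntegral_mono_set integrable_stdNormalPDF.integrableOn (.of_forall stdNormalPDF_nonneg)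
    (Iic_subset_Iic.mpr hxy).eventuallyLE

theorem integral_Ioi_stdNormalPDF (x : ℝ) : ∫ u in Ioi x, stdNormalPDF u = 1 - stdNormalCDF x := by
  rw [← integral_stdNormalPDF, ← intervalIntegral.integral_Iic_add_Ioi (b := x)
    integrable_stdNormalPDF.integrableOn integrable_stdNormalPDF.integrableOn, stdNormalCDF,
    add_sub_cancel_left]

theorem integrable_stdNormalPDF_mul_cdf_add (β : ℝ) :
    Integrable fun u => stdNormalPDF u * stdNormalCDF (u + β) := by
  refine integrable_stdNormalPDF.mul_bdd (c := 1)
    (monotone_stdNormalCDF.measurable.comp (measurable_add_const β)).aestronglyMeasurable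
    (.of_forall fun u => ?_)
  rw [Real.norm_of_nonneg (stdNormalCDF_nonneg _)]
  exact stdNormalCDF_le_one _

section AffineSubstitution

variable {a : ℝ} (b : ℝ)

theorem integrable_stdNormalPDF_comp_mul_add (ha : a ≠ 0) :
    Integrable fun t => stdNormalPDF (a * t + b) :=
  (integrable_stdNormalPDF.comp_add_right b).comp_mul_left' ha

theorem integral_stdNormalPDF_comp_mul_add (ha : a ≠ 0) :
    ∫ t, stdNormalPDF (a * t + b) = |a|⁻¹ := by
  simpa [integral_stdNormalPDF] using setIntegral_comp_mul_add stdNormalPDF ha b univ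

variable {b}

theorem integral_Iic_stdNormalPDF_comp_mul_add (ha : 0 < a) (c : ℝ) :
    ∫ t in Iic c, a * stdNormalPDF (a * t + b) = stdNormalCDF (a * c + b) := by
  have hpre : (fun t => a * t + b) ⁻¹' Iic (a * c + b) = Iic c := by
    ext t; simp [ha]
  rw [integral_const_mul, ← hpre, setIntegral_comp_mul_add _ ha.ne', abs_of_pos ha, smul_eq_mul,
    mul_inv_cancel_left₀ ha.ne', stdNormalCDF]

theorem integral_Ioi_stdNormalPDF_comp_mul_add (ha : 0 < a) (c : ℝ) :
    ∫ t in Ioi c, a * stdNormalPDF (a * t + b) = 1 - stdNormalCDF (a * c + b) := by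
  have hpre : (fun t => a * t + b) ⁻¹' Ioi (a * c + b) = Ioi c := by
    ext t; simp [ha]
  rw [integral_const_mul, ← hpre, setIntegral_comp_mul_add _ ha.ne', abs_of_pos ha, smul_eq_mul,
    mul_inv_cancel_left₀ ha.ne', integral_Ioi_stdNormalPDF]

end AffineSubstitution

theorem sqrt_two_pos : 0 < √2 := by positivity

theorem stdNormalPDF_mul_stdNormalPDF_rotate (u t : ℝ) :
    stdNormalPDF u * stdNormalPDF (√2 * t + u) = stdNormalPDF t * stdNormalPDF (√2 * u + t) := by
  unfold stdNormalPDF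
  rw [mul_mul_mul_comm, ← Real.exp_add, mul_mul_mul_comm, ← Real.exp_add]
  congr 2
  linear_combination (u ^ 2 - t ^ 2) / 2 * Real.sq_sqrt zero_le_two

theorem stdNormalCDF_add_eq_integral (u β : ℝ) :
    stdNormalCDF (u + β) = ∫ t in Iic (β / √2), √2 * stdNormalPDF (√2 * t + u) := by
  rw [integral_Iic_stdNormalPDF_comp_mul_add sqrt_two_pos, mul_div_cancel₀ _ sqrt_two_pos.ne',
    add_comm]

theorem integrable_stdNormalPDF_mul_rotate :
    Integrable (fun p : ℝ × ℝ => stdNormalPDF p.1 * (√2 * stdNormalPDF (√2 * p.2 + p.1)))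
      (volume.prod volume) := by
  have hnonneg (u t : ℝ) : 0 ≤ stdNormalPDF u * (√2 * stdNormalPDF (√2 * t + u)) := by
    have := stdNormalPDF_nonneg u
    have := stdNormalPDF_nonneg (√2 * t + u)
    positivity
  refine (integrable_prod_iff (Continuous.aestronglyMeasurable (by fun_prop))).2
    ⟨.of_forall fun u => ?_, ?_⟩
  · exact ((integrable_stdNormalPDF_comp_mul_add u sqrt_two_pos.ne').const_mul √2).const_mul
      (stdNormalPDF u)
  · convert integrable_stdNormalPDF with u
    simp_rw [Real.norm_of_nonneg (hnonneg u _), integral_const_mul,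
      integral_stdNormalPDF_comp_mul_add u sqrt_two_pos.ne', abs_of_pos sqrt_two_pos,
      mul_inv_cancel₀ sqrt_two_pos.ne', mul_one]

theorem setIntegral_stdNormalPDF_mul_cdf_add (β : ℝ) (s : Set ℝ) :
    ∫ u in s, stdNormalPDF u * stdNormalCDF (u + β)
      = ∫ t in Iic (β / √2), stdNormalPDF t * ∫ u in s, √2 * stdNormalPDF (√2 * u + t) := by
  calc ∫ u in s, stdNormalPDF u * stdNormalCDF (u + β)
      = ∫ u in s, ∫ t in Iic (β / √2), stdNormalPDF u * (√2 * stdNormalPDF (√2 * t + u)) := by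
        simp_rw [stdNormalCDF_add_eq_integral, integral_const_mul]
    _ = ∫ t in Iic (β / √2), ∫ u in s, stdNormalPDF u * (√2 * stdNormalPDF (√2 * t + u)) := by
        refine integral_integral_swap ?_
        rw [Measure.prod_restrict]
        exact integrable_stdNormalPDF_mul_rotate.restrict
    _ = ∫ t in Iic (β / √2), ∫ u in s, stdNormalPDF t * (√2 * stdNormalPDF (√2 * u + t)) := by
        simp_rw [mul_left_comm (stdNormalPDF _) √2, stdNormalPDF_mul_stdNormalPDF_rotate]
    _ = ∫ t in Iic (β / √2), stdNormalPDF t * ∫ u in s, √2 * stdNormalPDF (√2 * u + t) := by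
        simp_rw [integral_const_mul]

theorem integral_stdNormalPDF_mul_cdf_add (a : ℝ) :
    ∫ u, stdNormalPDF u * stdNormalCDF (u + a) = stdNormalCDF (a / √2) := by
  rw [← setIntegral_univ, setIntegral_stdNormalPDF_mul_cdf_add]
  simp_rw [setIntegral_univ, integral_const_mul,
    integral_stdNormalPDF_comp_mul_add _ sqrt_two_pos.ne', abs_of_pos sqrt_two_pos,
    mul_inv_cancel₀ sqrt_two_pos.ne', mul_one]
  rfl

theorem intI_eq_cdf_sub_setIntegral (α β : ℝ) :
    intI α β = stdNormalCDF (β / √2)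
      - ∫ t in Iic (β / √2), stdNormalPDF t * stdNormalCDF (t + √2 * α) := by
  calc intI α β
      = ∫ t in Iic (β / √2), (stdNormalPDF t - stdNormalPDF t * stdNormalCDF (t + √2 * α)) := by
        simp_rw [intI, setIntegral_stdNormalPDF_mul_cdf_add,
          integral_Ioi_stdNormalPDF_comp_mul_add sqrt_two_pos, mul_sub, mul_one, add_comm]
    _ = _ := integral_sub integrable_stdNormalPDF.integrableOn
        (integrable_stdNormalPDF_mul_cdf_add _).integrableOn

theorem intI_identity (α β : ℝ) :
    intI α β =
      stdNormalCDF (β / Real.sqrt 2) - stdNormalCDF α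
        + intI (β / Real.sqrt 2) (Real.sqrt 2 * α) := by
  have hsplit := intervalIntegral.integral_Iic_add_Ioi (b := β / √2) (μ := volume)
    (integrable_stdNormalPDF_mul_cdf_add (√2 * α)).integrableOn
    (integrable_stdNormalPDF_mul_cdf_add (√2 * α)).integrableOn
  rw [integral_stdNormalPDF_mul_cdf_add, mul_div_cancel_left₀ _ sqrt_two_pos.ne'] at hsplit
  rw [intI_eq_cdf_sub_setIntegral, intI]
  linarith
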